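/- arXiv:1704.05576 — 4 statements merged into one kernel-verified Lean document; each statement's English description precedes it below -/
import Mathlib

section
/- If targets are points on the real line sorted in increasing order and each sensor covers a contiguous closed interval, then for any assignment where S_i denotes the set of sensors covering target T_i, the intersection of the union of S_1,...,S_i with S_{i+1} equals the intersection of S_i with S_{i+1} (Markov property of interval coverage). -/
open Finset

/-- Markov property of interval coverage: for sorted targets on the line,
the sensors covering some earlier target and target `i+1` are exactly those
covering target `i` and target `i+1`. -/
theorem markov_property_of_interval_coverage
    (S : Finset (ℝ × ℝ)) (x : ℕ → ℝ) (hx : Monotone x) (i : ℕ)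
    (Scov : ℕ → Finset (ℝ × ℝ))
    (hScov : ∀ j, Scov j = S.filter (fun s => s.1 ≤ x j ∧ x j ≤ s.2)) :
    ((Finset.range (i + 1)).biUnion Scov) ∩ Scov (i + 1) = Scov i ∩ Scov (i + 1) := by
  ext s
  simp only [mem_inter, mem_biUnion, mem_range, hScov, mem_filter]
  constructor
  · rintro ⟨⟨j, hj, hsS, hu, _⟩, hsS', hu', hv'⟩
    exact ⟨⟨hsS, hu.trans (hx (Nat.lt_succ_iff.mp hj)),
      (hx (Nat.le_succ i)).trans hv'⟩, hsS', hu', hv'⟩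
  · rintro ⟨⟨hsS, hu, hv⟩, h'⟩
    exact ⟨⟨i, Nat.lt_succ_self i, hsS, hu, hv⟩, h'⟩
end

section
/- A continuous line coverage instance reduces to a discrete one: a subset C of intervals covers [a,b] if and only if C covers the finite set of discretization points consisting of a, b, and the midpoints of all consecutive pairs of interval endpoints lying in [a,b]. -/
/-- `C` covers the set `X` with its closed intervals. -/
def CoversSet (C : Finset (ℝ × ℝ)) (X : Set ℝ) : Prop :=
  X ⊆ ⋃ s ∈ C, Set.Icc s.1 s.2

/-- Continuous-to-discrete reduction: a subfamily `C ⊆ S` covers `[a,b]` iff it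
covers the finite set `P` consisting of `a`, `b`, all interval endpoints lying in
`[a,b]`, and the midpoints of consecutive pairs of these points. -/
theorem continuous_cover_iff_discrete_cover
    (S : Finset (ℝ × ℝ)) (a b : ℝ) (hab : a ≤ b) (C : Finset (ℝ × ℝ)) (hCS : C ⊆ S)
    (E : Finset ℝ)
    (hE : E = insert a (insert b
      ((S.image Prod.fst ∪ S.image Prod.snd).filter (fun x => a ≤ x ∧ x ≤ b))))
    (L : List ℝ) (hL : L = E.sort (· ≤ ·))
    (P : Set ℝ)
    (hP : P = (↑E : Set ℝ) ∪
      {m | ∃ i : ℕ, ∃ h : i + 1 < L.length,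
        m = (L.get ⟨i, Nat.lt_of_succ_lt h⟩ + L.get ⟨i + 1, h⟩) / 2}) :
    CoversSet C (Set.Icc a b) ↔ CoversSet C P := by
  classical
  subst hP
  have hEmem : ∀ y : ℝ, y ∈ E ↔ (y = a ∨ y = b ∨
      ((y ∈ S.image Prod.fst ∨ y ∈ S.image Prod.snd) ∧ a ≤ y ∧ y ≤ b)) := by
    intro y
    subst hE
    simp only [Finset.mem_insert, Finset.mem_filter, Finset.mem_union]
  have hEIcc : ∀ y ∈ E, a ≤ y ∧ y ≤ b := by
    intro y hy
    rcases (hEmem y).1 hy with h | h | h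
    · exact ⟨le_of_eq h.symm, h ▸ hab⟩
    · exact ⟨h ▸ hab, le_of_eq h⟩
    · exact h.2
  have haE : a ∈ E := (hEmem a).2 (Or.inl rfl)
  have hbE : b ∈ E := (hEmem b).2 (Or.inr (Or.inl rfl))
  have hLmem : ∀ y : ℝ, y ∈ L ↔ y ∈ E := by
    intro y; rw [hL]; exact Finset.mem_sort _
  have hLsorted : L.Pairwise (· ≤ ·) := hL ▸ Finset.pairwise_sort ..
  have hmono : ∀ (i j : Fin L.length), (i : ℕ) ≤ (j : ℕ) → L.get i ≤ L.get j := by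
    intro i j hij
    rcases eq_or_lt_of_le hij with h | h
    · exact le_of_eq (congrArg _ (Fin.ext h))
    · exact List.pairwise_iff_get.1 hLsorted i j h
  have hPIcc : (↑E : Set ℝ) ∪
      {m | ∃ i : ℕ, ∃ h : i + 1 < L.length,
        m = (L.get ⟨i, Nat.lt_of_succ_lt h⟩ + L.get ⟨i + 1, h⟩) / 2} ⊆ Set.Icc a b := by
    rintro m (hm | ⟨i, h, rfl⟩)
    · exact Set.mem_Icc.2 (hEIcc m hm)
    · have h1 := hEIcc _ ((hLmem _).1 (L.get_mem ⟨i, Nat.lt_of_succ_lt h⟩))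
      have h2 := hEIcc _ ((hLmem _).1 (L.get_mem ⟨i + 1, h⟩))
      exact Set.mem_Icc.2 ⟨by linarith [h1.1, h2.1], by linarith [h1.2, h2.2]⟩
  constructor
  · exact fun hc => Set.Subset.trans hPIcc hc
  · intro hc x hx
    by_cases hxE : x ∈ E
    · exact hc (Or.inl hxE)
    · obtain ⟨ka, hka⟩ := List.mem_iff_get.1 ((hLmem a).2 haE)
      obtain ⟨kb, hkb⟩ := List.mem_iff_get.1 ((hLmem b).2 hbE)
      set Q : ℕ → Prop := fun j => ∃ h : j < L.length, L.get ⟨j, h⟩ ≤ x with hQ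
      have hQa : Q (ka : ℕ) := by
        refine ⟨ka.isLt, ?_⟩
        have : L.get ⟨(ka : ℕ), ka.isLt⟩ = a := by rw [Fin.eta]; exact hka
        rw [this]; exact hx.1
      have hka_le : (ka : ℕ) ≤ L.length - 1 := Nat.le_sub_one_of_lt ka.isLt
      set j := Nat.findGreatest Q (L.length - 1) with hj
      obtain ⟨hjlt, hjx⟩ : Q j := Nat.findGreatest_spec hka_le hQa
      have hxb : x < b := lt_of_le_of_ne hx.2 fun h => hxE (h ▸ hbE)
      have hjkb : j < (kb : ℕ) := by
        by_contra h
        push_neg at h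
        have : b ≤ L.get ⟨j, hjlt⟩ := hkb ▸ hmono kb ⟨j, hjlt⟩ h
        linarith
      have hj1 : j + 1 < L.length := lt_of_le_of_lt hjkb kb.isLt
      have hxlt : x < L.get ⟨j + 1, hj1⟩ := by
        by_contra h
        push_neg at h
        exact Nat.findGreatest_is_greatest (Nat.lt_succ_self j)
          (le_trans hjkb (Nat.le_sub_one_of_lt kb.isLt)) ⟨hj1, h⟩
      have hjj1 : L.get ⟨j, hjlt⟩ < L.get ⟨j + 1, hj1⟩ := lt_of_le_of_lt hjx hxlt
      set m := (L.get ⟨j, hjlt⟩ + L.get ⟨j + 1, hj1⟩) / 2 with hm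
      have hmgt : L.get ⟨j, hjlt⟩ < m := by rw [hm]; linarith
      have hmlt : m < L.get ⟨j + 1, hj1⟩ := by rw [hm]; linarith
      have hmP : m ∈ (↑E : Set ℝ) ∪
          {m | ∃ i : ℕ, ∃ h : i + 1 < L.length,
            m = (L.get ⟨i, Nat.lt_of_succ_lt h⟩ + L.get ⟨i + 1, h⟩) / 2} :=
        Or.inr ⟨j, hj1, rfl⟩
      have hcm := hc hmP
      simp only [Set.mem_iUnion, Set.mem_Icc] at hcm
      obtain ⟨s, hsC, h1, h2⟩ := hcm
      have hLja := (hEIcc _ ((hLmem _).1 (L.get_mem ⟨j, hjlt⟩))).1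
      have hLj1b := (hEIcc _ ((hLmem _).1 (L.get_mem ⟨j + 1, hj1⟩))).2
      have hux : s.1 ≤ x := by
        by_contra hux
        push_neg at hux
        have hua : a < s.1 := lt_of_le_of_lt hx.1 hux
        have hub : s.1 ≤ b := le_trans (le_trans h1 hmlt.le) hLj1b
        have huE : s.1 ∈ E := (hEmem s.1).2 (Or.inr (Or.inr
          ⟨Or.inl (Finset.mem_image.2 ⟨s, hCS hsC, rfl⟩), hua.le, hub⟩))
        obtain ⟨k, hk⟩ := List.mem_iff_get.1 ((hLmem s.1).2 huE)
        have hkj : (k : ℕ) ≤ j := by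
          by_contra hkj
          push_neg at hkj
          have : L.get ⟨j + 1, hj1⟩ ≤ L.get k := hmono ⟨j + 1, hj1⟩ k hkj
          rw [hk] at this
          linarith
        have : s.1 ≤ L.get ⟨j, hjlt⟩ := hk ▸ hmono k ⟨j, hjlt⟩ hkj
        linarith
      have hxv : x ≤ s.2 := by
        by_contra hxv
        push_neg at hxv
        have hvb : s.2 < b := lt_of_lt_of_le hxv hx.2
        have hva : a ≤ s.2 := le_trans hLja (le_trans hmgt.le h2)
        have hvE : s.2 ∈ E := (hEmem s.2).2 (Or.inr (Or.inr
          ⟨Or.inr (Finset.mem_image.2 ⟨s, hCS hsC, rfl⟩), hva, hvb.le⟩))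
        obtain ⟨k, hk⟩ := List.mem_iff_get.1 ((hLmem s.2).2 hvE)
        have hkj : j + 1 ≤ (k : ℕ) := by
          by_contra hkj
          push_neg at hkj
          have : L.get k ≤ L.get ⟨j, hjlt⟩ := hmono k ⟨j, hjlt⟩ (Nat.lt_succ_iff.1 hkj)
          rw [hk] at this
          linarith
        have : L.get ⟨j + 1, hj1⟩ ≤ s.2 := hk ▸ hmono ⟨j + 1, hj1⟩ k hkj
        linarith
      simp only [Set.mem_iUnion, Set.mem_Icc]
      exact ⟨s, hsC, hux, hxv⟩
end

section
/- Greedy dominance invariant: after k steps, the greedy algorithm's current position is at least as far right as the position reached by any cover using k intervals. Formally, if intervals J_1,...,J_k (ordered with overlapping consecutive intervals starting at a) reach position q, then the greedy position p_k after k steps satisfies p_k ≥ q. -/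
/-- Greedy dominance invariant: after `k` steps the greedy position is at least
as far right as the position reached by any chain of `k` intervals from `S`
starting at `a` with overlapping consecutive intervals. -/
theorem greedy_dominance
    (S : Finset (ℝ × ℝ)) (a : ℝ) (k : ℕ) (hk : 0 < k)
    (p : ℕ → ℝ) (sel : ℕ → ℝ × ℝ)
    (hp0 : p 0 = a)
    (hrun : ∀ j < k, sel j ∈ S ∧ (sel j).1 ≤ p j ∧ p j ≤ (sel j).2 ∧
      p (j + 1) = (sel j).2 ∧
      ∀ t ∈ S, t.1 ≤ p j → p j ≤ t.2 → t.2 ≤ (sel j).2)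
    (J : ℕ → ℝ × ℝ) (hJS : ∀ j < k, J j ∈ S)
    (hJ0 : (J 0).1 ≤ a) (hJ0' : a ≤ (J 0).2)
    (hchain : ∀ j, j + 1 < k → (J (j + 1)).1 ≤ (J j).2) :
    (J (k - 1)).2 ≤ p k := by
  have key : ∀ j, j < k → (J j).2 ≤ p (j + 1) := by
    intro j
    induction j with
    | zero =>
      intro hj
      obtain ⟨_, _, _, hstep, hopt⟩ := hrun 0 hj
      rw [hstep]
      exact hopt _ (hJS 0 hj) (hp0 ▸ hJ0) (hp0 ▸ hJ0')
    | succ n ih =>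
      intro hj
      have hn : n < k := Nat.lt_of_succ_lt hj
      have ihn := ih hn
      obtain ⟨_, _, hle, hstep, hopt⟩ := hrun (n + 1) hj
      by_cases hc : p (n + 1) ≤ (J (n + 1)).2
      · rw [hstep]
        exact hopt _ (hJS (n + 1) hj) (le_trans (hchain n hj) ihn) hc
      · push_neg at hc
        rw [hstep]
        exact le_trans hc.le hle
  have := key (k - 1) (Nat.sub_lt hk one_pos)
  have hkk : k - 1 + 1 = k := Nat.succ_pred_eq_of_pos hk
  rwa [hkk] at this
end

section
/- If S is a finite family of intervals such that every point of [a,b] is covered by at least K intervals of S, then there exist K pairwise disjoint subfamilies C_1, ..., C_K of S, each of which covers [a,b]. -/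
open scoped Classical

/-- `C` covers the segment `[a,b]` with its closed intervals. -/
def Covers (C : Finset (ℝ × ℝ)) (a b : ℝ) : Prop :=
  Set.Icc a b ⊆ ⋃ s ∈ C, Set.Icc s.1 s.2

namespace KFC

variable {K : ℕ}

/-- state: reaches and classes -/
abbrev St (K : ℕ) := (Fin K → ℝ) × (Fin K → Finset (ℝ × ℝ))

/-- pick an eligible class of minimal reach -/
noncomputable def pick (R : Fin K → ℝ) (s : ℝ × ℝ) : Option (Fin K) :=
  if h : (Finset.univ.filter fun c => s.1 ≤ R c ∧ R c < s.2).Nonempty then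
    some (Finset.exists_min_image _ R h).choose
  else none

lemma pick_spec {R : Fin K → ℝ} {s : ℝ × ℝ} {c : Fin K} (h : pick R s = some c) :
    (s.1 ≤ R c ∧ R c < s.2) ∧ ∀ c', s.1 ≤ R c' → R c' < s.2 → R c ≤ R c' := by
  rw [pick] at h
  split at h
  · rename_i hne
    obtain ⟨hc1, hc2⟩ := (Finset.exists_min_image _ R hne).choose_spec
    cases h
    refine ⟨by simpa using hc1, fun c' h1 h2 => hc2 c' (by simp [h1, h2])⟩
  · exact absurd h (by simp)

lemma pick_isSome {R : Fin K → ℝ} {s : ℝ × ℝ} {c : Fin K}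
    (h1 : s.1 ≤ R c) (h2 : R c < s.2) : ∃ c0, pick R s = some c0 := by
  rw [pick, dif_pos ⟨c, by simp [h1, h2]⟩]
  exact ⟨_, rfl⟩

noncomputable def step (st : St K) (s : ℝ × ℝ) : St K :=
  (pick st.1 s).elim st
    (fun c => (Function.update st.1 c s.2, Function.update st.2 c (insert s (st.2 c))))

lemma step_R_mono (st : St K) (s : ℝ × ℝ) (c : Fin K) : st.1 c ≤ (step st s).1 c := by
  rw [step]
  cases hp : pick st.1 s with
  | none => simp
  | some c0 =>
    simp only [Option.elim]
    rcases eq_or_ne c c0 with rfl | hne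
    · simp only [Function.update_self]
      exact le_of_lt (pick_spec hp).1.2
    · rw [Function.update_of_ne hne]

lemma foldl_R_mono (st : St K) (L : List (ℝ × ℝ)) (c : Fin K) :
    st.1 c ≤ (L.foldl step st).1 c := by
  induction L generalizing st with
  | nil => simp
  | cons s L ih => exact le_trans (step_R_mono st s c) (by simpa using ih (step st s))

lemma step_R_untouched {st : St K} {s : ℝ × ℝ} {c : Fin K} (h : st.1 c < s.1) :
    (step st s).1 c = st.1 c := by
  rw [step]
  cases hp : pick st.1 s with
  | none => simp
  | some c0 =>
    have hne : c ≠ c0 := by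
      intro he
      exact absurd ((pick_spec hp).1.1) (by rw [← he]; exact not_le.mpr h)
    simp only [Option.elim]
    rw [Function.update_of_ne hne]

lemma freeze {st : St K} {L : List (ℝ × ℝ)} {c : Fin K} {v : ℝ}
    (hL : ∀ u ∈ L, v ≤ u.1) (h : st.1 c < v) : (L.foldl step st).1 c = st.1 c := by
  induction L generalizing st with
  | nil => rfl
  | cons s L ih =>
    have h1 : (step st s).1 c = st.1 c :=
      step_R_untouched (lt_of_lt_of_le h (hL s (by simp)))
    have := ih (fun u hu => hL u (by simp [hu])) (st := step st s) (by rw [h1]; exact h)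
    simpa [this] using h1

lemma cover_inv {a : ℝ} (st : St K) (L : List (ℝ × ℝ)) (c : Fin K)
    (h : st.1 c ≤ a ∨ Set.Icc a (st.1 c) ⊆ ⋃ s ∈ st.2 c, Set.Icc s.1 s.2) :
    (L.foldl step st).1 c ≤ a ∨
      Set.Icc a ((L.foldl step st).1 c) ⊆ ⋃ s ∈ (L.foldl step st).2 c, Set.Icc s.1 s.2 := by
  induction L generalizing st with
  | nil => exact h
  | cons s L ih =>
    refine ih (step st s) ?_
    rw [step]
    cases hp : pick st.1 s with
    | none => simpa using h
    | some c0 =>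
      simp only [Option.elim]
      rcases eq_or_ne c c0 with rfl | hne
      · right
        simp only [Function.update_self]
        intro y hy
        obtain ⟨hs1, hs2⟩ := (pick_spec hp).1
        rcases le_or_gt s.1 y with h1 | h1
        · exact Set.mem_biUnion (Finset.mem_insert_self _ _) ⟨h1, hy.2⟩
        · have hy' : y ∈ Set.Icc a (st.1 c) := ⟨hy.1, by linarith⟩
          rcases h with h | h
          · exact absurd hy'.2 (by push_neg; linarith [hy.1])
          · obtain ⟨t, ht, hyt⟩ := Set.mem_iUnion₂.mp (h hy')
            exact Set.mem_biUnion (Finset.mem_insert_of_mem ht) hyt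
      · rw [Function.update_of_ne hne, Function.update_of_ne hne]
        exact h

lemma mem_inv (st : St K) (L : List (ℝ × ℝ)) (c : Fin K) {t : ℝ × ℝ}
    (h : t ∈ (L.foldl step st).2 c) : t ∈ st.2 c ∨ t ∈ L := by
  induction L generalizing st with
  | nil => exact Or.inl h
  | cons s L ih =>
    rcases ih (step st s) (by simpa using h) with h' | h'
    · rw [step] at h'
      cases hp : pick st.1 s with
      | none => rw [hp] at h'; exact Or.inl h'
      | some c0 =>
        rw [hp] at h'
        simp only [Option.elim] at h'
        rcases eq_or_ne c c0 with rfl | hne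
        · rw [Function.update_self] at h'
          rcases Finset.mem_insert.mp h' with rfl | h'
          · exact Or.inr (by simp)
          · exact Or.inl h'
        · rw [Function.update_of_ne hne] at h'
          exact Or.inl h'
    · exact Or.inr (by simp [h'])

lemma disj_inv (st : St K) (L : List (ℝ × ℝ)) (hnd : L.Nodup)
    (hout : ∀ c, ∀ t ∈ st.2 c, t ∉ L)
    (hdisj : ∀ i j : Fin K, i ≠ j → Disjoint (st.2 i) (st.2 j)) :
    ∀ i j : Fin K, i ≠ j → Disjoint ((L.foldl step st).2 i) ((L.foldl step st).2 j) := by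
  induction L generalizing st with
  | nil => exact hdisj
  | cons s L ih =>
    have hnd' : L.Nodup := (List.nodup_cons.mp hnd).2
    have hsL : s ∉ L := (List.nodup_cons.mp hnd).1
    refine ih (step st s) hnd' ?_ ?_
    · intro c t ht
      rw [step] at ht
      cases hp : pick st.1 s with
      | none =>
        rw [hp] at ht
        exact fun hc => hout c t ht (by simp [hc])
      | some c0 =>
        rw [hp] at ht
        simp only [Option.elim] at ht
        rcases eq_or_ne c c0 with rfl | hne
        · rw [Function.update_self] at ht
          rcases Finset.mem_insert.mp ht with rfl | ht
          · exact hsL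
          · exact fun hc => hout c t ht (by simp [hc])
        · rw [Function.update_of_ne hne] at ht
          exact fun hc => hout c t ht (by simp [hc])
    · intro i j hij
      rw [step]
      cases hp : pick st.1 s with
      | none => simpa using hdisj i j hij
      | some c0 =>
        simp only [Option.elim]
        have hs : ∀ c, s ∉ st.2 c := fun c hc => hout c s hc (by simp)
        rcases eq_or_ne i c0 with rfl | hi
        · rw [Function.update_self, Function.update_of_ne (Ne.symm hij)]
          exact Finset.disjoint_insert_left.mpr ⟨hs j, hdisj i j hij⟩
        · rw [Function.update_of_ne hi]
          rcases eq_or_ne j c0 with rfl | hj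
          · rw [Function.update_self]
            exact Finset.disjoint_insert_right.mpr ⟨hs i, hdisj i j hij⟩
          · rw [Function.update_of_ne hj]
            exact hdisj i j hij

end KFC


/-- Cover decomposition for intervals: a `K`-fold interval cover of `[a,b]`
contains `K` pairwise disjoint subfamilies, each covering `[a,b]`. -/
theorem K_fold_cover_decomposition
    (S : Finset (ℝ × ℝ)) (K : ℕ) (a b : ℝ) (hab : a < b)
    (hcov : ∀ x ∈ Set.Icc a b,
      K ≤ (S.filter (fun s => s.1 ≤ x ∧ x ≤ s.2)).card) :
    ∃ C : Fin K → Finset (ℝ × ℝ), (∀ j, C j ⊆ S) ∧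
      (∀ i j, i ≠ j → Disjoint (C i) (C j)) ∧ ∀ j, Covers (C j) a b := by
  classical
  set L : List (ℝ × ℝ) := S.toList.mergeSort (fun u v => decide (u.1 ≤ v.1)) with hL
  have hperm : L.Perm S.toList := List.mergeSort_perm _ _
  have hsorted : List.Pairwise (fun u v : ℝ × ℝ => u.1 ≤ v.1) L := by
    have := List.pairwise_mergeSort (le := fun u v : ℝ × ℝ => decide (u.1 ≤ v.1))
      (by intro a b c h1 h2; simp_all; linarith)
      (by intro a b; simpa using le_total a.1 b.1) S.toList
    simpa [List.Pairwise, hL] using this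
  have hnd : L.Nodup := hperm.nodup_iff.mpr S.nodup_toList
  have hmemL : ∀ s : ℝ × ℝ, s ∈ L ↔ s ∈ S := by
    intro s; rw [hperm.mem_iff, Finset.mem_toList]
  set init : KFC.St K := (fun _ => a, fun _ => ∅) with hinit
  set F := L.foldl KFC.step init with hF
  set st : ℕ → KFC.St K := fun n => (L.take n).foldl KFC.step init with hst
  have hstlen : st L.length = F := by rw [hst, hF]; simp [List.take_length]
  have hsucc : ∀ n (h : n < L.length), st (n + 1) = KFC.step (st n) (L[n]'h) := by
    intro n h
    simp only [hst]
    rw [List.take_succ, List.getElem?_eq_getElem h, Option.toList_some, List.foldl_append,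
      List.foldl_cons, List.foldl_nil]
  have hsucc' : ∀ n, ∀ c, (st n).1 c ≤ (st (n + 1)).1 c := by
    intro n c
    rcases lt_or_ge n L.length with h | h
    · rw [hsucc n h]; exact KFC.step_R_mono _ _ _
    · have heq : L.take (n + 1) = L.take n := by
        rw [List.take_of_length_le h, List.take_of_length_le (by omega)]
      simp only [hst, heq, le_refl]
  have hmono : ∀ {m n : ℕ}, m ≤ n → ∀ c, (st m).1 c ≤ (st n).1 c := by
    intro m n h c
    induction n, h using Nat.le_induction with
    | base => exact le_refl _
    | succ n hmn ih => exact le_trans ih (hsucc' n c)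
  have hmonoF : ∀ n c, (st n).1 c ≤ F.1 c := by
    intro n c
    rcases le_or_gt n L.length with h | h
    · rw [← hstlen]; exact hmono h c
    · have heq : L.take n = L := List.take_of_length_le h.le
      simp only [hst, heq]; rw [hF]
  have hsplit : ∀ n, F = (L.drop n).foldl KFC.step (st n) := by
    intro n
    rw [hF, hst, ← List.foldl_append, List.take_append_drop]
  -- main claim: every class reaches b
  have hreach : ∀ c, b ≤ F.1 c := by
    by_contra hcon
    push_neg at hcon
    obtain ⟨c1, hc1⟩ := hcon
    have hKpos : 0 < K := c1.pos
    obtain ⟨cs, -, hcsmin⟩ := Finset.exists_min_image (Finset.univ : Finset (Fin K)) F.1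
      ⟨c1, Finset.mem_univ c1⟩
    set t := F.1 cs with htdef
    have htb : t < b := lt_of_le_of_lt (hcsmin c1 (Finset.mem_univ c1)) hc1
    have hta : a ≤ t := by
      have := KFC.foldl_R_mono init L cs
      rw [← hF] at this
      simpa [hinit] using this
    set M : Finset ℝ := insert b ((S.filter fun s => t < s.1).image Prod.fst) with hM
    have hMne : M.Nonempty := ⟨b, Finset.mem_insert_self _ _⟩
    have hMgt : ∀ y ∈ M, t < y := by
      intro y hy
      rcases Finset.mem_insert.mp hy with rfl | hy
      · exact htb
      · obtain ⟨s, hs, rfl⟩ := Finset.mem_image.mp hy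
        exact (Finset.mem_filter.mp hs).2
    set m := M.min' hMne with hm
    have htm : t < m := hMgt _ (M.min'_mem hMne)
    have hmb : m ≤ b := M.min'_le _ (Finset.mem_insert_self _ _)
    set x := (t + m) / 2 with hx
    have hx1 : t < x := by rw [hx]; linarith
    have hx2 : x < m := by rw [hx]; linarith
    have hxa : a ≤ x := le_trans hta hx1.le
    have hxb : x ≤ b := le_trans hx2.le hmb
    have hleft : ∀ s ∈ S, s.1 ≤ x → s.1 ≤ t := by
      intro s hs h1
      by_contra h
      push_neg at h
      have hsM : s.1 ∈ M :=
        Finset.mem_insert_of_mem (Finset.mem_image_of_mem _ (Finset.mem_filter.mpr ⟨hs, h⟩))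
      have := M.min'_le _ hsM
      linarith
    set T := S.filter fun s => s.1 ≤ x ∧ x ≤ s.2 with hT
    have hTcard : K ≤ T.card := hcov x ⟨hxa, hxb⟩
    have hTmem : ∀ s ∈ T, s ∈ S ∧ s.1 ≤ x ∧ x ≤ s.2 := by
      intro s hs
      simpa using Finset.mem_filter.mp hs
    set idx : (ℝ × ℝ) → ℕ :=
      fun s => if h : s ∈ L then (List.mem_iff_getElem.mp h).choose else 0 with hidx
    have hidx_spec : ∀ s : ℝ × ℝ, s ∈ L → ∃ h : idx s < L.length, L[idx s] = s := by
      intro s hs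
      simp only [hidx, dif_pos hs]
      exact (List.mem_iff_getElem.mp hs).choose_spec
    have hkey : ∀ s ∈ T, ∃ c0, KFC.pick (st (idx s)).1 s = some c0 ∧
        (st (idx s)).1 c0 ≤ t ∧ (st (idx s + 1)).1 c0 = s.2 := by
      intro s hsT
      obtain ⟨hsS, hsx1, hsx2⟩ := hTmem s hsT
      have hsL : s ∈ L := (hmemL s).mpr hsS
      obtain ⟨hlt, hget⟩ := hidx_spec s hsL
      have hst1 : s.1 ≤ t := hleft s hsS hsx1
      have hA : s.1 ≤ (st (idx s)).1 cs := by
        by_contra h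
        push_neg at h
        have hdropall : ∀ u ∈ L.drop (idx s), s.1 ≤ u.1 := by
          have hds := hsorted.sublist (List.drop_sublist (idx s) L)
          rw [List.drop_eq_getElem_cons hlt, hget] at hds
          intro u hu
          rw [List.drop_eq_getElem_cons hlt, hget] at hu
          rcases List.mem_cons.mp hu with rfl | hu
          · exact le_refl _
          · exact (List.pairwise_cons.mp hds).1 u hu
        have hfz := KFC.freeze hdropall h
        rw [← hsplit (idx s)] at hfz
        rw [← htdef] at hfz
        linarith [hfz ▸ hst1]
      have hB : (st (idx s)).1 cs < s.2 := by
        have := hmonoF (idx s) cs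
        rw [← htdef] at this
        linarith
      obtain ⟨c0, hc0⟩ := KFC.pick_isSome hA hB
      obtain ⟨⟨h1, h2⟩, hminp⟩ := KFC.pick_spec hc0
      have hcst : (st (idx s)).1 cs ≤ t := by
        have := hmonoF (idx s) cs; rw [← htdef] at this; exact this
      refine ⟨c0, hc0, le_trans (hminp cs hA hB) hcst, ?_⟩
      rw [hsucc (idx s) hlt]
      rw [KFC.step]
      have hgeq : KFC.pick (st (idx s)).1 L[idx s] = some c0 := by rw [hget]; exact hc0
      rw [hgeq]
      simp only [Option.elim]
      rw [hget]
      simp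
    set G : (ℝ × ℝ) → Fin K := fun s => (KFC.pick (st (idx s)).1 s).getD cs with hG
    have hGfacts : ∀ s ∈ T, (st (idx s)).1 (G s) ≤ t ∧ (st (idx s + 1)).1 (G s) = s.2 := by
      intro s hsT
      obtain ⟨c0, hc0, hle, heq⟩ := hkey s hsT
      have : G s = c0 := by rw [hG]; simp [hc0]
      rw [this]
      exact ⟨hle, heq⟩
    have hGF : ∀ s ∈ T, x ≤ F.1 (G s) := by
      intro s hsT
      obtain ⟨-, heq⟩ := hGfacts s hsT
      have h2 := hmonoF (idx s + 1) (G s)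
      rw [heq] at h2
      exact le_trans (hTmem s hsT).2.2 h2
    have hGne : ∀ s ∈ T, G s ≠ cs := by
      intro s hsT he
      have := hGF s hsT
      rw [he, ← htdef] at this
      linarith
    have hord : ∀ s ∈ T, ∀ s' ∈ T, idx s < idx s' → G s ≠ G s' := by
      intro s hsT s' hsT' hlt hGeq
      obtain ⟨-, heq⟩ := hGfacts s hsT
      obtain ⟨hle', -⟩ := hGfacts s' hsT'
      have h1 : (st (idx s + 1)).1 (G s) ≤ (st (idx s')).1 (G s) := hmono hlt (G s)
      rw [heq, hGeq] at h1
      have h2 := (hTmem s hsT).2.2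
      linarith
    have hinj : Set.InjOn G T := by
      intro s hsT s' hsT' hGeq
      by_contra hne
      have hsT2 := hsT; have hsT2' := hsT'
      rw [Finset.mem_coe] at hsT2 hsT2'
      rcases Nat.lt_trichotomy (idx s) (idx s') with h | h | h
      · exact hord s hsT2 s' hsT2' h hGeq
      · obtain ⟨hl1, e1⟩ := hidx_spec s ((hmemL s).mpr (hTmem s hsT2).1)
        obtain ⟨hl2, e2⟩ := hidx_spec s' ((hmemL s').mpr (hTmem s' hsT2').1)
        apply hne
        rw [← e1, ← e2]
        congr 1
      · exact hord s' hsT2' s hsT2 h hGeq.symm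
    have hmaps : ∀ s ∈ T, G s ∈ Finset.univ.erase cs := by
      intro s hsT
      exact Finset.mem_erase.mpr ⟨hGne s hsT, Finset.mem_univ _⟩
    have hle := Finset.card_le_card_of_injOn G hmaps hinj
    have hcard : (Finset.univ.erase cs).card = K - 1 := by simp
    omega
  -- assemble
  refine ⟨F.2, ?_, ?_, ?_⟩
  · intro j s hs
    rcases KFC.mem_inv init L j hs with h | h
    · simp [hinit] at h
    · exact (hmemL s).mp h
  · intro i j hij
    refine KFC.disj_inv init L hnd ?_ ?_ i j hij
    · intro c t' ht'
      simp [hinit] at ht'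
    · intro i j hij
      simp [hinit]
  · intro j
    have hinv := KFC.cover_inv (a := a) init L j (Or.inl (le_refl a))
    rw [← hF] at hinv
    rcases hinv with h | h
    · exfalso
      have := hreach j
      linarith
    · exact fun y hy => h ⟨hy.1, le_trans hy.2 (hreach j)⟩
end
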